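/- arXiv:1106.2616 — 2 statements merged into one kernel-verified Lean document; each statement's English description precedes it below -/
import Mathlib

section
/- For ρ ∈ W and n ≥ 2, the function π_{ρ,n} defined by π_{ρ,n}(k) = max(k - (n - ρ(n) + 1), 0) for k < n and π_{ρ,n}(k) = ρ(k) - 1 for k ≥ n belongs to P_n(ρ). -/
/-!
Below `n` the function `π = piMin ρ n` is `0` up to `m = n - ρ n + 1` and then rises with slope `1`,
reaching `ρ n - 1` at `n`; from `n` on it is `ρ - 1`. All its increments are `0` or `1`, which gives
`π ∈ P_n`. Since `n - π n = m`, the jump of `π⁺_n` happens exactly where the ramp starts: on the ramp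
`π⁺_n k = ρ n - (n - k) ≤ ρ k` because `ρ` is `1`-Lipschitz, and for `k ≥ n` the monotonicity of
`k - ρ k` puts `k` past the threshold, so `π⁺_n k = ρ k`.
-/

/-- W': weakly increasing, ρ 0 = 0, steps at most 1. -/
def Wprime (ρ : ℕ → ℕ) : Prop :=
  Monotone ρ ∧ ρ 0 = 0 ∧ ∀ k, ρ (k + 1) ≤ ρ k + 1

/-- W = {ρ ∈ W' : ρ k ≥ min k 2}. -/
def Wset (ρ : ℕ → ℕ) : Prop :=
  Wprime ρ ∧ ∀ k, min k 2 ≤ ρ k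

/-- Standard numerical perversity of level n. -/
def Pn (n : ℕ) (p : ℕ → ℕ) : Prop :=
  p 0 = 0 ∧ 0 < p n ∧ p n < n ∧ Monotone p ∧ Monotone (fun k => k - p k)

/-- The perversity p⁺ₙ. -/
def piPlus (n : ℕ) (p : ℕ → ℕ) (k : ℕ) : ℕ :=
  if n - p n ≤ k - p k then p k + 1 else p k

/-- P_n(ρ). -/
def PnRho (n : ℕ) (ρ p : ℕ → ℕ) : Prop :=
  Pn n p ∧ (∀ k, piPlus n p k ≤ ρ k) ∧ ∀ k, n ≤ k → piPlus n p k = ρ k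

/-- The minimal element π_{ρ,n}. -/
def piMin (ρ : ℕ → ℕ) (n k : ℕ) : ℕ :=
  if k < n then k - (n - ρ n + 1) else ρ k - 1

section StepBounded

variable {p : ℕ → ℕ}

theorem monotone_sub_self_of_succ_le (hp : ∀ k, p (k + 1) ≤ p k + 1) :
    Monotone fun k => k - p k :=
  monotone_nat_of_le_succ fun k => by
    show k - p k ≤ k + 1 - p (k + 1)
    have := hp k
    omega

theorem le_add_sub_of_succ_le (hp : ∀ k, p (k + 1) ≤ p k + 1) {a b : ℕ} (hab : a ≤ b) :
    p b ≤ p a + (b - a) := by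
  induction b, hab using Nat.le_induction with
  | base => simp
  | succ b hab ih =>
    have := hp b
    omega

end StepBounded

namespace Wprime

variable {ρ : ℕ → ℕ}

theorem le_self (hρ : Wprime ρ) (k : ℕ) : ρ k ≤ k := by
  simpa [hρ.2.1] using le_add_sub_of_succ_le hρ.2.2 (Nat.zero_le k)

end Wprime

section PiMin

variable {ρ : ℕ → ℕ} {n k : ℕ}

theorem piMin_of_lt (h : k < n) : piMin ρ n k = k - (n - ρ n + 1) := if_pos h

theorem piMin_of_le (h : n ≤ k) : piMin ρ n k = ρ k - 1 := if_neg (not_lt.2 h)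

theorem piMin_zero (hρ : Wprime ρ) : piMin ρ n 0 = 0 := by
  unfold piMin
  split <;> simp [hρ.2.1]

theorem piMin_le_succ_and_succ_le (hρ : Wprime ρ) (k : ℕ) :
    piMin ρ n k ≤ piMin ρ n (k + 1) ∧ piMin ρ n (k + 1) ≤ piMin ρ n k + 1 := by
  rcases lt_trichotomy (k + 1) n with hk | rfl | hk
  · rw [piMin_of_lt hk, piMin_of_lt (by omega)]
    omega
  · have := hρ.le_self (k + 1)
    rw [piMin_of_lt (by omega), piMin_of_le le_rfl]
    omega
  · have := hρ.1 (Nat.le_add_right k 1)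
    have := hρ.2.2 k
    rw [piMin_of_le (by omega), piMin_of_le hk.le]
    omega

theorem piMin_mem_Pn (hρ : Wprime ρ) (hρn : 2 ≤ ρ n) : Pn n (piMin ρ n) := by
  have := hρ.le_self n
  have hstep := piMin_le_succ_and_succ_le (n := n) hρ
  refine ⟨piMin_zero hρ, ?_, ?_, monotone_nat_of_le_succ fun k => (hstep k).1,
    monotone_sub_self_of_succ_le fun k => (hstep k).2⟩ <;>
  · rw [piMin_of_le le_rfl]
    omega

theorem piPlus_piMin_of_le (hρ : Wprime ρ) (hρn : 0 < ρ n) (hk : n ≤ k) :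
    piPlus n (piMin ρ n) k = ρ k := by
  have : n - ρ n ≤ k - ρ k := monotone_sub_self_of_succ_le hρ.2.2 hk
  have := hρ.1 hk
  have := hρ.le_self k
  rw [piPlus, piMin_of_le le_rfl, piMin_of_le hk, if_pos (by omega)]
  omega

theorem piPlus_piMin_le (hρ : Wprime ρ) (hρn : 0 < ρ n) (k : ℕ) :
    piPlus n (piMin ρ n) k ≤ ρ k := by
  rcases lt_or_ge k n with hk | hk
  · have := le_add_sub_of_succ_le hρ.2.2 hk.le
    have := hρ.le_self n
    rw [piPlus, piMin_of_le le_rfl, piMin_of_lt hk]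
    split <;> omega
  · exact (piPlus_piMin_of_le hρ hρn hk).le

end PiMin

theorem piMin_mem_PnRho (ρ : ℕ → ℕ) (n : ℕ) (hρ : Wset ρ) (hn : 2 ≤ n) :
    PnRho n ρ (piMin ρ n) := by
  obtain ⟨hw, hmin⟩ := hρ
  have hρn : 2 ≤ ρ n := by simpa [hn] using hmin n
  exact ⟨piMin_mem_Pn hw hρn, piPlus_piMin_le hw (by omega),
    fun k hk => piPlus_piMin_of_le hw (by omega) hk⟩
end

section
/- Let ρ ∈ W and n ≥ 2. There exists π ∈ P_n(ρ) with π⁺_n = ρ (as functions) if and only if ρ(n-1) < ρ(n). -/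
/-!
For `π ∈ P_n` the bump of `π⁺_n` at `n` forces `π⁺_n (n - 1) < π⁺_n n`: either `π` is flat at `n`,
and then `n - 1` misses the bump, or `π` already increases there. Conversely, if `ρ` jumps at `n`
then `ρ` lowered by one from `n` on is a perversity of level `n` whose `⁺_n` is `ρ` again, because
the bump condition `n - π n ≤ k - π k` holds exactly for `k ≥ n`.
-/

namespace Wprime

variable {ρ : ℕ → ℕ}

theorem monotone_sub (hρ : Wprime ρ) : Monotone fun k => k - ρ k := by
  refine monotone_nat_of_le_succ fun k => ?_
  have := hρ.2.2 k
  have := hρ.le_self k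
  omega

theorem eq_add_one_of_pred_lt (hρ : Wprime ρ) {n : ℕ} (hjump : ρ (n - 1) < ρ n) :
    ρ n = ρ (n - 1) + 1 := by
  cases n with
  | zero => exact absurd hjump (lt_irrefl _)
  | succ m => exact le_antisymm (hρ.2.2 m) hjump

end Wprime

theorem Pn.piPlus_pred_lt {n : ℕ} {p : ℕ → ℕ} (hp : Pn n p) :
    piPlus n p (n - 1) < piPlus n p n := by
  obtain ⟨-, -, hpn, hmono, hsub⟩ := hp
  have hp_pred : p (n - 1) ≤ p n := hmono (Nat.sub_le n 1)
  have hsub_pred : (n - 1) - p (n - 1) ≤ n - p n := hsub (Nat.sub_le n 1)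
  unfold piPlus
  split_ifs <;> omega

def lowerFrom (n : ℕ) (ρ : ℕ → ℕ) (k : ℕ) : ℕ :=
  if k < n then ρ k else ρ k - 1

section lowerFrom

variable {n : ℕ} {ρ : ℕ → ℕ}

theorem piPlus_lowerFrom (hρ : Wprime ρ) (hjump : ρ (n - 1) < ρ n) :
    piPlus n (lowerFrom n ρ) = ρ := by
  funext k
  have hlower_n : lowerFrom n ρ n = ρ n - 1 := if_neg (lt_irrefl n)
  unfold piPlus
  rw [hlower_n]
  have := hρ.le_self (n - 1)
  have := hρ.eq_add_one_of_pred_lt hjump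
  rcases lt_or_ge k n with hk | hk
  · have hsub : k - ρ k ≤ (n - 1) - ρ (n - 1) := hρ.monotone_sub (Nat.le_pred_of_lt hk)
    simp only [lowerFrom, if_pos hk]
    rw [if_neg (by omega)]
  · have hsub : n - ρ n ≤ k - ρ k := hρ.monotone_sub hk
    have : ρ n ≤ ρ k := hρ.1 hk
    have := hρ.le_self k
    simp only [lowerFrom, if_neg (not_lt.2 hk)]
    rw [if_pos (by omega)]
    omega

theorem pn_lowerFrom (hρ : Wset ρ) (hn : 2 ≤ n) (hjump : ρ (n - 1) < ρ n) :
    Pn n (lowerFrom n ρ) := by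
  obtain ⟨hW, hmin⟩ := hρ
  have hρn_le := hW.le_self n
  have hρn_two : 2 ≤ ρ n := by have := hmin n; omega
  have hρn_step := hW.eq_add_one_of_pred_lt hjump
  refine ⟨?_, ?_, ?_, ?_, ?_⟩
  · simp only [lowerFrom, if_pos (by omega : 0 < n)]; exact hW.2.1
  · simp only [lowerFrom, lt_irrefl, if_false]; omega
  · simp only [lowerFrom, lt_irrefl, if_false]; omega
  · refine monotone_nat_of_le_succ fun k => ?_
    have : ρ k ≤ ρ (k + 1) := hW.1 k.le_succ
    unfold lowerFrom
    split_ifs with hk hk' <;> try omega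
    obtain rfl : n = k + 1 := by omega
    rw [Nat.add_sub_cancel] at hjump
    omega
  · refine monotone_nat_of_le_succ fun k => ?_
    have := hW.2.2 k
    have := hW.le_self k
    have := hW.le_self (k + 1)
    have : k < n ∨ ρ n ≤ ρ k := (lt_or_ge k n).imp_right (hW.1 ·)
    show k - lowerFrom n ρ k ≤ (k + 1) - lowerFrom n ρ (k + 1)
    unfold lowerFrom
    split_ifs <;> omega

end lowerFrom

theorem exists_piPlus_eq_iff (ρ : ℕ → ℕ) (n : ℕ) (hρ : Wset ρ) (hn : 2 ≤ n) :
    (∃ p, PnRho n ρ p ∧ ∀ k, piPlus n p k = ρ k) ↔ ρ (n - 1) < ρ n := by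
  constructor
  · rintro ⟨p, ⟨hp, -, -⟩, hpρ⟩
    rw [← hpρ, ← hpρ]
    exact hp.piPlus_pred_lt
  · intro hjump
    have hplus := piPlus_lowerFrom hρ.1 hjump
    refine ⟨lowerFrom n ρ, ⟨pn_lowerFrom hρ hn hjump, ?_, ?_⟩, ?_⟩ <;> simp [hplus]
end
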